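/- arXiv:1908.11455 — 6 statements merged into one kernel-verified Lean document; each statement's English description precedes it below -/
import Mathlib

section
/- Let w ∈ S_∞ and let a, b be positive integers with |a−b| = 1. If there exists a reduced word of w in which every occurrence of s_a comes before every occurrence of s_b, then in every reduced word of w, every occurrence of s_a comes before every occurrence of s_b. -/
open Equiv

/-- The simple transposition `sᵢ = (i, i+1)` in `S_∞` (realized as `Equiv.Perm ℕ`). -/
def EGs (i : ℕ) : Equiv.Perm ℕ := Equiv.swap i (i + 1)

/-- Coxeter length: the minimal length of a word in the simple transpositions for `w`. -/
noncomputable def coxLength (w : Equiv.Perm ℕ) : ℕ :=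
  sInf {k | ∃ l : List ℕ, (l.map EGs).prod = w ∧ l.length = k}

/-- `l` is a reduced word for `w`. -/
def IsReducedWord (w : Equiv.Perm ℕ) (l : List ℕ) : Prop :=
  (l.map EGs).prod = w ∧ l.length = coxLength w

/-- Top-to-bottom, right-to-left reading word of a filling of `μ`. -/
def readingWord (μ : YoungDiagram) (T : ℕ → ℕ → ℕ) : List ℕ :=
  (List.range (μ.colLen 0)).flatMap fun i =>
    ((List.range (μ.rowLen i)).reverse).map fun j => T i j

/-- Standard Young tableaux of shape `μ`, as entry functions: strictly increasing along
rows and columns, zero outside `μ`, and the labels on the cells are exactly `1,…,|μ|`. -/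
def SYTset (μ : YoungDiagram) : Set (ℕ → ℕ → ℕ) :=
  {T | (∀ i j1 j2, j1 < j2 → (i, j2) ∈ μ.cells → T i j1 < T i j2) ∧
       (∀ i1 i2 j, i1 < i2 → (i2, j) ∈ μ.cells → T i1 j < T i2 j) ∧
       (∀ i j, (i, j) ∉ μ.cells → T i j = 0) ∧
       μ.cells.image (fun c => T c.1 c.2) = Finset.Icc 1 μ.card}

/-- Edelman–Greene tableaux of type `(μ, w)`, as entry functions: strictly increasing
along rows and columns, zero outside `μ`, whose reading word is a reduced word of `w`. -/
def EGset (μ : YoungDiagram) (w : Equiv.Perm ℕ) : Set (ℕ → ℕ → ℕ) :=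
  {T | (∀ i j1 j2, j1 < j2 → (i, j2) ∈ μ.cells → T i j1 < T i j2) ∧
       (∀ i1 i2 j, i1 < i2 → (i2, j) ∈ μ.cells → T i1 j < T i2 j) ∧
       (∀ i j, (i, j) ∉ μ.cells → T i j = 0) ∧
       IsReducedWord w (readingWord μ T)}

/-- Standardization: the cell `(i,j)` receives the rank of its entry, where equal
entries are ordered left to right (by column). -/
def stdEntry (μ : YoungDiagram) (T : ℕ → ℕ → ℕ) (i j : ℕ) : ℕ :=
  if (i, j) ∈ μ.cells then
    (μ.cells.filter fun c =>
      T c.1 c.2 < T i j ∨ (T c.1 c.2 = T i j ∧ c.2 < j) ∨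
        (T c.1 c.2 = T i j ∧ c.2 = j ∧ c.1 ≤ i)).card
  else 0

/-- `k` is a descent of the standard tableau `U`: the cell labeled `k - 1` lies weakly
east of the cell labeled `k`. -/
def IsDescent (μ : YoungDiagram) (U : ℕ → ℕ → ℕ) (k : ℕ) : Prop :=
  ∃ c ∈ μ.cells, ∃ c' ∈ μ.cells, U c.1 c.2 = k ∧ U c'.1 c'.2 = k - 1 ∧ c.2 ≤ c'.2

open scoped Classical in
/-- The sweep map: a cell's entry is one plus the number of descents of `U` that are
at most its label in `U`. -/
noncomputable def sweepEntry (μ : YoungDiagram) (U : ℕ → ℕ → ℕ) (i j : ℕ) : ℕ :=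
  if (i, j) ∈ μ.cells then
    ((Finset.Icc 1 (U i j)).filter fun k => IsDescent μ U k).card + 1
  else 0

/-- `w` is totally commutative: it has a reduced word whose letters are pairwise
at distance at least `2`. -/
def TotallyCommutative (w : Equiv.Perm ℕ) : Prop :=
  ∃ l : List ℕ, IsReducedWord w l ∧ l.Pairwise fun a b => 2 ≤ Nat.dist a b

/-- In a word `l`, every occurrence of `a` comes before every occurrence of `b`. -/
def AllBefore (l : List ℕ) (a b : ℕ) : Prop :=
  ∀ p q : Fin l.length, l.get p = a → l.get q = b → (p : ℕ) < (q : ℕ)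

/-!
By Matsumoto's theorem any two reduced words of `w` are connected by commutation and braid
moves. We prove it by Tits' induction: if two reduced words of `w` end in different letters `i`
and `j`, both are right descents of `w` (`w (i + 1) < w i`, detected by the inversion count,
which equals the Coxeter length), so `w` also has reduced words ending in either reduced word of
the longest element of `⟨sᵢ, sⱼ⟩`, and these differ by a single move.
It then suffices that a single move cannot create or destroy an occurrence of `b` before an
occurrence of `a`. A commutation move never exchanges `a` and `b`, because they are adjacent.
A braid move whose letters are not `{a, b}` only permutes occurrences of one of them inside a
block, and a braid move on `{a, b}` has `b` before `a` on both sides.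
-/

lemma EGs_mul_self (i : ℕ) : EGs i * EGs i = 1 := swap_mul_self _ _

lemma EGs_commute {i j : ℕ} (h : 2 ≤ Nat.dist i j) : Commute (EGs i) (EGs j) := by
  unfold Nat.dist at h
  exact (Perm.disjoint_swap_swap (by simp; omega)).commute

lemma EGs_braid (i : ℕ) : EGs i * EGs (i + 1) * EGs i = EGs (i + 1) * EGs i * EGs (i + 1) := by
  simp only [EGs]
  rw [swap_mul_swap_mul_swap (x := i) (by omega) (by omega), swap_comm i,
    swap_comm (i + 1) (i + 1 + 1), swap_mul_swap_mul_swap (by omega) (by omega), swap_comm]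

def inversions (w : Perm ℕ) : Set (ℕ × ℕ) := {p | p.1 < p.2 ∧ w p.2 < w p.1}

lemma inversions_one : inversions 1 = ∅ :=
  Set.eq_empty_of_forall_notMem fun _ hp => lt_asymm hp.1 hp.2

lemma inversions_mul_EGs_of_lt {w : Perm ℕ} {i : ℕ} (h : w i < w (i + 1)) :
    inversions (w * EGs i) =
      Equiv.prodCongr (EGs i) (EGs i) '' inversions w ∪ {(i, i + 1)} := by
  ext ⟨x, y⟩
  rw [Set.mem_union, Set.mem_image_equiv]
  simp only [inversions, Set.mem_ofPred_eq, Set.mem_singleton_iff, Prod.mk.injEq, Perm.mul_apply,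
    Equiv.prodCongr_symm, Equiv.prodCongr_apply, Prod.map, symm_swap, EGs, swap_apply_def]
  split_ifs <;> omega

lemma encard_inversions_mul_EGs_of_lt {w : Perm ℕ} {i : ℕ} (h : w i < w (i + 1)) :
    (inversions (w * EGs i)).encard = (inversions w).encard + 1 := by
  rw [inversions_mul_EGs_of_lt h, Set.encard_union_eq, (Equiv.injective _).encard_image,
    Set.encard_singleton]
  rw [Set.disjoint_singleton_right, Set.mem_image_equiv]
  simp [inversions, EGs]

lemma encard_inversions_mul_EGs_of_gt {w : Perm ℕ} {i : ℕ} (h : w (i + 1) < w i) :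
    (inversions (w * EGs i)).encard + 1 = (inversions w).encard := by
  have h' : (w * EGs i) i < (w * EGs i) (i + 1) := by simpa [EGs] using h
  simpa [mul_assoc, EGs_mul_self] using (encard_inversions_mul_EGs_of_lt h').symm

lemma encard_inversions_prod_le (l : List ℕ) :
    (inversions (l.map EGs).prod).encard ≤ l.length := by
  induction l using List.reverseRecOn with
  | nil => simp [inversions_one]
  | append_singleton l i ih =>
    simp only [List.map_append, List.map_singleton, List.prod_append, List.prod_singleton,
      List.length_append, List.length_singleton, Nat.cast_add, Nat.cast_one]
    rcases lt_or_gt_of_ne ((l.map EGs).prod.injective.ne (Nat.succ_ne_self i).symm) with h | h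
    · rw [encard_inversions_mul_EGs_of_lt h]
      gcongr
    · rw [← encard_inversions_mul_EGs_of_gt h] at ih
      exact le_self_add.trans (ih.trans le_self_add)

lemma eq_one_or_exists_descent (w : Perm ℕ) : w = 1 ∨ ∃ i, w (i + 1) < w i := by
  refine or_iff_not_imp_right.2 fun h => ?_
  push Not at h
  have hw := strictMono_nat_of_lt_succ fun i => (h i).lt_of_ne (w.injective.ne (by omega))
  ext x
  exact congrArg (· x) (Subsingleton.elim (hw.orderIsoOfSurjective w w.surjective) (.refl ℕ))

lemma exists_word_of_encard_inversions {w : Perm ℕ} {n : ℕ}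
    (hn : (inversions w).encard = n) : ∃ l : List ℕ, (l.map EGs).prod = w ∧ l.length = n := by
  induction n generalizing w with
  | zero =>
    rcases eq_one_or_exists_descent w with rfl | ⟨i, hi⟩
    · exact ⟨[], rfl, rfl⟩
    · have := encard_inversions_mul_EGs_of_gt hi
      simp [hn] at this
  | succ n ih =>
    rcases eq_one_or_exists_descent w with rfl | ⟨i, hi⟩
    · rw [inversions_one, Set.encard_empty] at hn
      exact absurd hn.symm (by simp)
    have := encard_inversions_mul_EGs_of_gt hi
    obtain ⟨l, hl, rfl⟩ := ih (w := w * EGs i) (by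
      rw [hn] at this; exact WithTop.add_right_cancel ENat.one_ne_top this)
    exact ⟨l ++ [i], by simp [hl, mul_assoc, EGs_mul_self], by simp⟩

section ReducedWords

variable {w : Perm ℕ} {l : List ℕ}

lemma coxLength_le (hl : (l.map EGs).prod = w) : coxLength w ≤ l.length :=
  Nat.sInf_le ⟨l, hl, rfl⟩

lemma exists_isReducedWord (hl : (l.map EGs).prod = w) : ∃ r, IsReducedWord w r := by
  obtain ⟨r, hr, hlen⟩ := Nat.sInf_mem (⟨l.length, l, hl, rfl⟩ :
    {k | ∃ l : List ℕ, (l.map EGs).prod = w ∧ l.length = k}.Nonempty)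
  exact ⟨r, hr, hlen⟩

lemma coxLength_eq_encard_inversions (hl : (l.map EGs).prod = w) :
    (coxLength w : ℕ∞) = (inversions w).encard := by
  obtain ⟨r, hr, hlen⟩ := exists_isReducedWord hl
  have hfin : (inversions w).encard ≠ ⊤ :=
    ne_top_of_le_ne_top (ENat.natCast_ne_top _) (hr ▸ encard_inversions_prod_le r)
  obtain ⟨n, hn⟩ := ENat.ne_top_iff_exists.1 hfin
  obtain ⟨m, hm, rfl⟩ := exists_word_of_encard_inversions hn.symm
  refine le_antisymm ?_ (hlen ▸ hr ▸ encard_inversions_prod_le r)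
  rw [← hn]
  exact_mod_cast coxLength_le hm

lemma coxLength_mul_EGs_of_lt (hl : (l.map EGs).prod = w) {i : ℕ} (h : w i < w (i + 1)) :
    coxLength (w * EGs i) = coxLength w + 1 := by
  have hl' : ((l ++ [i]).map EGs).prod = w * EGs i := by simp [hl]
  have := encard_inversions_mul_EGs_of_lt h
  rw [← coxLength_eq_encard_inversions hl, ← coxLength_eq_encard_inversions hl'] at this
  exact_mod_cast this

lemma coxLength_mul_EGs_of_gt (hl : (l.map EGs).prod = w) {i : ℕ} (h : w (i + 1) < w i) :
    coxLength (w * EGs i) + 1 = coxLength w := by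
  have h' : (w * EGs i) i < (w * EGs i) (i + 1) := by simpa [EGs] using h
  simpa [mul_assoc, EGs_mul_self] using
    (coxLength_mul_EGs_of_lt (l := l ++ [i]) (by simp [hl]) h').symm

lemma isReducedWord_append_singleton_iff {u : List ℕ} {i : ℕ} :
    IsReducedWord w (u ++ [i]) ↔ w (i + 1) < w i ∧ IsReducedWord (w * EGs i) u := by
  constructor
  · rintro ⟨hw, hlen⟩
    have hu : (u.map EGs).prod = w * EGs i := by simp [← hw, mul_assoc, EGs_mul_self]
    have hle := coxLength_le hu
    simp only [List.length_append, List.length_singleton] at hlen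
    have hi : w (i + 1) < w i := by
      refine (lt_or_gt_of_ne (w.injective.ne (by omega : i + 1 ≠ i))).resolve_right fun h => ?_
      have := coxLength_mul_EGs_of_lt hw h
      omega
    have := coxLength_mul_EGs_of_gt hw hi
    exact ⟨hi, hu, by omega⟩
  · rintro ⟨hi, hu, hlen⟩
    have hw : ((u ++ [i]).map EGs).prod = w := by simp [hu, mul_assoc, EGs_mul_self]
    have := coxLength_mul_EGs_of_gt hw hi
    exact ⟨hw, by simp only [List.length_append, List.length_singleton]; omega⟩

lemma exists_isReducedWord_append_commute (hl : IsReducedWord w l) {i j : ℕ}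
    (hij : 2 ≤ Nat.dist i j) (hi : w (i + 1) < w i) (hj : w (j + 1) < w j) :
    ∃ r, IsReducedWord w (r ++ [j] ++ [i]) ∧ IsReducedWord w (r ++ [i] ++ [j]) := by
  obtain ⟨r, hr⟩ := exists_isReducedWord (w := w * EGs i * EGs j) (l := l ++ [i] ++ [j])
    (by simp [hl.1, mul_assoc])
  have hr' : IsReducedWord (w * EGs j * EGs i) r := by
    rwa [mul_assoc, ← (EGs_commute hij).eq, ← mul_assoc]
  unfold Nat.dist at hij
  simp only [isReducedWord_append_singleton_iff]
  exact ⟨r, ⟨hi, by simpa (disch := omega) [EGs, swap_apply_of_ne_of_ne] using hj, hr⟩,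
    ⟨hj, by simpa (disch := omega) [EGs, swap_apply_of_ne_of_ne] using hi, hr'⟩⟩

lemma exists_isReducedWord_append_braid (hl : IsReducedWord w l) {i : ℕ}
    (hi : w (i + 1) < w i) (hi' : w (i + 1 + 1) < w (i + 1)) :
    ∃ r, IsReducedWord w (r ++ [i + 1] ++ [i] ++ [i + 1]) ∧
      IsReducedWord w (r ++ [i] ++ [i + 1] ++ [i]) := by
  obtain ⟨r, hr⟩ := exists_isReducedWord (w := w * EGs i * EGs (i + 1) * EGs i)
    (l := l ++ [i] ++ [i + 1] ++ [i]) (by simp [hl.1, mul_assoc])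
  have hr' : IsReducedWord (w * EGs (i + 1) * EGs i * EGs (i + 1)) r := by
    rwa [mul_assoc, mul_assoc, ← mul_assoc (EGs (i + 1)), ← EGs_braid, ← mul_assoc, ← mul_assoc]
  simp only [isReducedWord_append_singleton_iff]
  refine ⟨r, ⟨hi', ?_, ?_, hr'⟩, ⟨hi, ?_, ?_, hr⟩⟩ <;>
    simp (disch := omega) only [EGs, Perm.coe_mul, Function.comp_apply, swap_apply_left,
      swap_apply_right, swap_apply_of_ne_of_ne] <;> omega

end ReducedWords

inductive BraidMove : List ℕ → List ℕ → Prop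
  | commute {i j : ℕ} (p q : List ℕ) (h : 2 ≤ Nat.dist i j) :
      BraidMove (p ++ [i, j] ++ q) (p ++ [j, i] ++ q)
  | braid (i : ℕ) (p q : List ℕ) :
      BraidMove (p ++ [i, i + 1, i] ++ q) (p ++ [i + 1, i, i + 1] ++ q)

lemma BraidMove.append_right {l l' : List ℕ} (h : BraidMove l l') (s : List ℕ) :
    BraidMove (l ++ s) (l' ++ s) := by
  cases h with
  | commute p q h => simpa using BraidMove.commute p (q ++ s) h
  | braid i p q => simpa using BraidMove.braid i p (q ++ s)

lemma eqvGen_braidMove_append_right {l l' : List ℕ} (h : Relation.EqvGen BraidMove l l')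
    (s : List ℕ) : Relation.EqvGen BraidMove (l ++ s) (l' ++ s) := by
  induction h with
  | rel _ _ h => exact .rel _ _ (h.append_right s)
  | refl => exact .refl _
  | symm _ _ _ ih => exact .symm _ _ ih
  | trans _ _ _ _ _ ih₁ ih₂ => exact .trans _ _ _ ih₁ ih₂

theorem IsReducedWord.eqvGen_braidMove {w : Perm ℕ} {l l' : List ℕ} (hl : IsReducedWord w l)
    (hl' : IsReducedWord w l') : Relation.EqvGen BraidMove l l' := by
  obtain ⟨n, hn⟩ : ∃ n, l.length = n := ⟨_, rfl⟩
  have hn' : l'.length = n := hl'.2.trans (hl.2.symm.trans hn)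
  induction n generalizing w l l' with
  | zero =>
    rw [List.length_eq_zero_iff.1 hn, List.length_eq_zero_iff.1 hn']
    exact .refl _
  | succ n ih =>
    obtain ⟨u, i, rfl⟩ := (List.eq_nil_or_concat' l).resolve_left (by rintro rfl; simp at hn)
    obtain ⟨u', j, rfl⟩ := (List.eq_nil_or_concat' l').resolve_left (by rintro rfl; simp at hn')
    simp only [List.length_append, List.length_singleton, Nat.add_right_cancel_iff] at hn hn'
    wlog hij : i ≤ j generalizing i j u u'
    · exact .symm _ _ (this _ _ hl' _ _ hl hn' hn (by omega))
    obtain ⟨hi, hu⟩ := isReducedWord_append_singleton_iff.1 hl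
    obtain ⟨hj, hu'⟩ := isReducedWord_append_singleton_iff.1 hl'
    have strip {x : ℕ} {m m' : List ℕ} (hm : IsReducedWord (w * EGs x) m)
        (hm' : IsReducedWord (w * EGs x) m') (hlen : m.length = n) :
        Relation.EqvGen BraidMove (m ++ [x]) (m' ++ [x]) :=
      eqvGen_braidMove_append_right (ih hm hm' hlen (hm'.2.trans (hm.2.symm.trans hlen))) _
    rcases (show i = j ∨ j = i + 1 ∨ 2 ≤ Nat.dist i j by unfold Nat.dist; omega)
      with rfl | rfl | hij
    · exact strip hu hu' hn
    · obtain ⟨r, h₁, h₂⟩ := exists_isReducedWord_append_braid hl hi hj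
      have hmove : BraidMove (r ++ [i] ++ [i + 1] ++ [i]) (r ++ [i + 1] ++ [i] ++ [i + 1]) := by
        simpa using BraidMove.braid i r []
      exact .trans _ _ _ (strip hu (isReducedWord_append_singleton_iff.1 h₂).2 hn)
        (.trans _ _ _ (.rel _ _ hmove)
          (.symm _ _ (strip hu' (isReducedWord_append_singleton_iff.1 h₁).2 hn')))
    · obtain ⟨r, h₁, h₂⟩ := exists_isReducedWord_append_commute hl hij hi hj
      have hmove : BraidMove (r ++ [j] ++ [i]) (r ++ [i] ++ [j]) := by
        simpa using BraidMove.commute r [] (by rwa [Nat.dist_comm])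
      exact .trans _ _ _ (strip hu (isReducedWord_append_singleton_iff.1 h₁).2 hn)
        (.trans _ _ _ (.rel _ _ hmove)
          (.symm _ _ (strip hu' (isReducedWord_append_singleton_iff.1 h₂).2 hn')))

lemma List.pairwise_append_append_congr {α : Type*} {R : α → α → Prop} {X X' : List α}
    (hmem : ∀ c, c ∈ X ↔ c ∈ X') (hX : X.Pairwise R ↔ X'.Pairwise R) (p q : List α) :
    (p ++ X ++ q).Pairwise R ↔ (p ++ X' ++ q).Pairwise R := by
  simp only [List.pairwise_append, List.mem_append, hmem, hX]

section AllBefore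

variable {a b : ℕ} {l l' : List ℕ}

lemma allBefore_iff_pairwise (hab : a ≠ b) :
    AllBefore l a b ↔ l.Pairwise fun x y => x = b → y ≠ a := by
  rw [List.pairwise_iff_getElem]
  constructor
  · rintro h i j hi hj hij hb ha
    exact absurd (h ⟨j, hj⟩ ⟨i, hi⟩ ha hb) (by simpa using hij.le)
  · intro h p q hp hq
    by_contra! hqp
    exact h q p q.2 p.2 (lt_of_le_of_ne hqp fun he => hab (by simp_all)) hq hp

lemma BraidMove.allBefore_iff (hab : Nat.dist a b = 1) (h : BraidMove l l') :
    AllBefore l a b ↔ AllBefore l' a b := by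
  unfold Nat.dist at hab
  rw [allBefore_iff_pairwise (by omega), allBefore_iff_pairwise (by omega)]
  cases h with
  | commute p q h =>
    unfold Nat.dist at h
    refine List.pairwise_append_append_congr (by simp [or_comm]) ?_ p q
    simp only [ne_eq, List.pairwise_cons, List.mem_cons, List.not_mem_nil, or_false, forall_eq,
      IsEmpty.forall_iff, implies_true, List.Pairwise.nil, and_self, and_true]
    omega
  | braid i p q =>
    refine List.pairwise_append_append_congr (fun c => ?_) ?_ p q
    · simp only [List.mem_cons, List.not_mem_nil, or_false]
      omega
    simp only [ne_eq, List.pairwise_cons, List.mem_cons, List.not_mem_nil, or_false,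
      forall_eq_or_imp, forall_eq, IsEmpty.forall_iff, implies_true, List.Pairwise.nil, and_self,
      and_true]
    omega

lemma allBefore_iff_of_eqvGen_braidMove (hab : Nat.dist a b = 1)
    (h : Relation.EqvGen BraidMove l l') : AllBefore l a b ↔ AllBefore l' a b := by
  induction h with
  | rel _ _ h => exact h.allBefore_iff hab
  | refl => rfl
  | symm _ _ _ ih => exact ih.symm
  | trans _ _ _ _ _ ih₁ ih₂ => exact ih₁.trans ih₂

end AllBefore

theorem stmt1_general (w : Equiv.Perm ℕ) (a b : ℕ)
    (hab : Nat.dist a b = 1) (l : List ℕ) (hl : IsReducedWord w l)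
    (h : AllBefore l a b) :
    ∀ l' : List ℕ, IsReducedWord w l' → AllBefore l' a b :=
  fun _ hl' => (allBefore_iff_of_eqvGen_braidMove hab (hl.eqvGen_braidMove hl')).1 h

theorem stmt1 (w : Equiv.Perm ℕ) (a b : ℕ) (ha : 0 < a) (hb : 0 < b)
    (hab : Nat.dist a b = 1) (l : List ℕ) (hl : IsReducedWord w l)
    (h : AllBefore l a b) :
    ∀ l' : List ℕ, IsReducedWord w l' → AllBefore l' a b :=
  stmt1_general w a b hab l hl h
end

section
/- The standardization map std, restricted to semistandard Young tableaux of shape λ with a fixed content μ, is injective into the set of standard Young tableaux of shape λ. -/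
open Equiv

/-!
The standardized entry of a cell with value `v` is its rank among the cells, so it lies
strictly above the number of cells with value `< v` and at most the number with value `≤ v`.
Equal content makes these cumulative counts `N v = #{cells with value < v}` the same for
both tableaux, and since `N` is monotone, any number in `(N v, N (v + 1)]` determines `v`.
-/

open Finset

section CountBelow

variable {α : Type*} (s : Finset α) (f : α → ℕ)

def countBelow (v : ℕ) : ℕ := #{a ∈ s | f a < v}

lemma countBelow_monotone : Monotone (countBelow s f) :=
  fun _ _ hvw => card_le_card fun _ ha => by
    simp only [mem_filter] at ha ⊢
    exact ⟨ha.1, ha.2.trans_le hvw⟩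

lemma countBelow_succ (v : ℕ) :
    countBelow s f (v + 1) = countBelow s f v + #{a ∈ s | f a = v} := by
  classical
  rw [countBelow, countBelow, ← card_union_of_disjoint, ← filter_or]
  · exact congrArg card (filter_congr fun _ _ => Nat.lt_succ_iff_lt_or_eq)
  · exact disjoint_filter.mpr fun _ _ hlt heq => hlt.ne heq

lemma countBelow_eq_of_card_fiber_eq {g : α → ℕ}
    (h : ∀ v, #{a ∈ s | f a = v} = #{a ∈ s | g a = v}) :
    countBelow s f = countBelow s g := by
  funext v
  induction v with
  | zero => simp [countBelow]
  | succ v ih => rw [countBelow_succ, countBelow_succ, ih, h]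

end CountBelow

lemma eq_of_mem_Ioc_of_monotone {N : ℕ → ℕ} (hN : Monotone N) {a b r : ℕ}
    (ha : r ∈ Set.Ioc (N a) (N (a + 1))) (hb : r ∈ Set.Ioc (N b) (N (b + 1))) : a = b := by
  by_contra hab
  rcases Nat.lt_or_gt_of_ne hab with h | h
  · exact (hb.1.trans_le ha.2).not_ge (hN (Nat.succ_le_of_lt h))
  · exact (ha.1.trans_le hb.2).not_ge (hN (Nat.succ_le_of_lt h))

lemma stdEntry_mem_Ioc (μ : YoungDiagram) (S : ℕ → ℕ → ℕ) {i j : ℕ} (hij : (i, j) ∈ μ.cells) :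
    stdEntry μ S i j ∈ Set.Ioc (countBelow μ.cells (fun c => S c.1 c.2) (S i j))
      (countBelow μ.cells (fun c => S c.1 c.2) (S i j + 1)) := by
  rw [stdEntry, if_pos hij]
  constructor
  · refine card_lt_card ((ssubset_iff_of_subset ?_).mpr ⟨(i, j), ?_, by simp⟩)
    · exact fun c hc => mem_filter.mpr ⟨(mem_filter.mp hc).1, Or.inl (mem_filter.mp hc).2⟩
    · exact mem_filter.mpr ⟨hij, Or.inr (Or.inr ⟨rfl, rfl, le_rfl⟩)⟩
  · refine card_le_card fun c hc => ?_
    rw [mem_filter] at hc ⊢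
    dsimp only at hc ⊢
    exact ⟨hc.1, by omega⟩

/-- Standardization is injective on semistandard Young tableaux of shape `μ`
with a fixed content. -/
theorem stmt2 (μ : YoungDiagram) (T T' : SemistandardYoungTableau μ)
    (hcontent : ∀ v : ℕ, (μ.cells.filter fun c => T c.1 c.2 = v).card
      = (μ.cells.filter fun c => T' c.1 c.2 = v).card)
    (hstd : ∀ i j, stdEntry μ (fun i j => T i j) i j
      = stdEntry μ (fun i j => T' i j) i j) :
    T = T' := by
  ext i j
  by_cases hij : (i, j) ∈ μ.cells
  · have hN := countBelow_eq_of_card_fiber_eq μ.cells (fun c => T c.1 c.2) hcontent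
    have hT := stdEntry_mem_Ioc μ (fun i j => T i j) hij
    have hT' := stdEntry_mem_Ioc μ (fun i j => T' i j) hij
    rw [← hstd, ← hN] at hT'
    exact eq_of_mem_Ioc_of_monotone (countBelow_monotone _ _) hT hT'
  · rw [T.zeros, T'.zeros] <;> rwa [← YoungDiagram.mem_cells]
end

section
/- For any standard Young tableau U of shape λ, the tableau sweep(U), whose entry in cell (x,y) is one plus the number of descents of U that are at most the label of (x,y) in U, is a semistandard Young tableau of shape λ (weakly increasing along rows and strictly increasing along columns). -/
open Equiv

/-!
Along a row the labels of `U` increase, so the set of descents counted grows. Down a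
column, from label `a` in cell `(i₁, j)` to label `b` in cell `(i₂, j)`, some label in
`(a, b]` must be a descent: a run of non-descents moves strictly east at every step,
so without a descent the cell labelled `b` would lie strictly east of column `j`.
-/

theorem YoungDiagram.mem_cells_of_le {μ : YoungDiagram} {i₁ i₂ j₁ j₂ : ℕ} (hi : i₁ ≤ i₂)
    (hj : j₁ ≤ j₂) (h : (i₂, j₂) ∈ μ.cells) : (i₁, j₁) ∈ μ.cells := by
  rw [mem_cells] at h ⊢
  exact μ.up_left_mem hi hj h

section Sweep

variable {μ : YoungDiagram} {U : ℕ → ℕ → ℕ}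

theorem col_lt_of_forall_not_isDescent
    (himg : μ.cells.image (fun c => U c.1 c.2) = Finset.Icc 1 μ.card)
    {a b : ℕ} (hab : a < b) (hno : ∀ k, a < k → k ≤ b → ¬ IsDescent μ U k)
    {c c' : ℕ × ℕ} (hc : c ∈ μ.cells) (hc' : c' ∈ μ.cells)
    (ha : U c.1 c.2 = a) (hb : U c'.1 c'.2 = b) : c.2 < c'.2 := by
  induction b, hab using Nat.le_induction generalizing c' with
  | base =>
    by_contra hle
    exact hno (a + 1) a.lt_succ_self le_rfl ⟨c', hc', c, hc, hb, by simp [ha], not_lt.mp hle⟩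
  | succ b hab ih =>
    have hb_mem : b ∈ Finset.Icc 1 μ.card := by
      have hb' : b + 1 ∈ Finset.Icc 1 μ.card := himg ▸ hb ▸ Finset.mem_image_of_mem _ hc'
      simp only [Finset.mem_Icc] at hb' ⊢
      omega
    obtain ⟨c'', hc'', hc''b⟩ := Finset.mem_image.mp (himg ▸ hb_mem)
    have hcc'' : c.2 < c''.2 :=
      ih (fun k hk hkb => hno k hk (hkb.trans b.le_succ)) hc'' hc''b
    by_contra hle
    exact hno (b + 1) (by omega) le_rfl
      ⟨c', hc', c'', hc'', hb, by simp [hc''b], by omega⟩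

theorem exists_isDescent_of_col (hU : U ∈ SYTset μ) {i₁ i₂ j : ℕ} (hi : i₁ < i₂)
    (h₂ : (i₂, j) ∈ μ.cells) : ∃ k, U i₁ j < k ∧ k ≤ U i₂ j ∧ IsDescent μ U k := by
  obtain ⟨-, hcol, -, himg⟩ := hU
  by_contra! hno
  exact lt_irrefl j <| col_lt_of_forall_not_isDescent himg (hcol i₁ i₂ j hi h₂)
    hno (YoungDiagram.mem_cells_of_le hi.le le_rfl h₂) h₂ rfl rfl

theorem sweepEntry_le_sweepEntry {i₁ j₁ i₂ j₂ : ℕ} (h₁ : (i₁, j₁) ∈ μ.cells)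
    (h₂ : (i₂, j₂) ∈ μ.cells) (hle : U i₁ j₁ ≤ U i₂ j₂) :
    sweepEntry μ U i₁ j₁ ≤ sweepEntry μ U i₂ j₂ := by
  classical
  simp only [sweepEntry, if_pos h₁, if_pos h₂]
  gcongr

theorem sweepEntry_lt_sweepEntry_of_isDescent {i₁ j₁ i₂ j₂ k : ℕ} (h₁ : (i₁, j₁) ∈ μ.cells)
    (h₂ : (i₂, j₂) ∈ μ.cells) (hk₁ : U i₁ j₁ < k) (hk₂ : k ≤ U i₂ j₂) (hk : IsDescent μ U k) :
    sweepEntry μ U i₁ j₁ < sweepEntry μ U i₂ j₂ := by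
  classical
  simp only [sweepEntry, if_pos h₁, if_pos h₂]
  refine Nat.succ_lt_succ (Finset.card_lt_card ⟨?_, fun hsub => ?_⟩)
  · exact Finset.filter_subset_filter _ (Finset.Icc_subset_Icc_right (hk₁.le.trans hk₂))
  · have hk_mem := hsub (Finset.mem_filter.mpr ⟨Finset.mem_Icc.mpr ⟨by omega, hk₂⟩, hk⟩)
    exact hk₁.not_ge (Finset.mem_Icc.mp (Finset.mem_filter.mp hk_mem).1).2

end Sweep

/-- For a standard Young tableau `U` of shape `μ`, `sweep U` is weakly increasing
along rows and strictly increasing along columns, i.e. it is semistandard. -/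
theorem stmt3 (μ : YoungDiagram) (U : ℕ → ℕ → ℕ) (hU : U ∈ SYTset μ) :
    (∀ i j1 j2, j1 < j2 → (i, j2) ∈ μ.cells →
      sweepEntry μ U i j1 ≤ sweepEntry μ U i j2) ∧
    (∀ i1 i2 j, i1 < i2 → (i2, j) ∈ μ.cells →
      sweepEntry μ U i1 j < sweepEntry μ U i2 j) := by
  refine ⟨fun i j₁ j₂ hj h₂ => ?_, fun i₁ i₂ j hi h₂ => ?_⟩
  · exact sweepEntry_le_sweepEntry (YoungDiagram.mem_cells_of_le le_rfl hj.le h₂) h₂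
      (hU.1 i j₁ j₂ hj h₂).le
  · obtain ⟨k, hk₁, hk₂, hk⟩ := exists_isDescent_of_col hU hi h₂
    exact sweepEntry_lt_sweepEntry_of_isDescent (YoungDiagram.mem_cells_of_le hi.le le_rfl h₂) h₂
      hk₁ hk₂ hk
end

section
/- Let U be an Edelman–Greene tableau of type (λ, w). If two cells (x,y) and (c,d) lie in the same sweep of std(U) (i.e. they receive the same label in sweep(std(U))) and y < d, then the label of (x,y) in U is at most the label of (c,d) in U. -/
open Equiv

/-!
Suppose `U c d < U x y`. Then the standardization `V = std U` has `V c d < V x y`, and equal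
sweeps mean that no `k` with `V c d < k ≤ V x y` is a descent of `V`. Without a descent, the
cell labelled `k - 1` lies strictly west of the cell labelled `k`, so walking down the labels
from `V x y` to `V c d` moves strictly west at every step and ends in column `d < y`, which is
impossible.
-/

open Finset Function

section Rank

variable {α β : Type*} [LinearOrder α] (s : Finset β) (f : β → α)

def rankBy (a : β) : ℕ := #{b ∈ s | f b ≤ f a}

variable {s f}

lemma rankBy_pos {a : β} (ha : a ∈ s) : 0 < rankBy s f a :=
  card_pos.mpr ⟨a, mem_filter.mpr ⟨ha, le_rfl⟩⟩

lemma rankBy_lt_rankBy {a b : β} (hb : b ∈ s) (h : f a < f b) :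
    rankBy s f a < rankBy s f b := by
  refine card_lt_card ⟨fun c hc => ?_, fun hsub => ?_⟩
  · rw [mem_filter] at hc ⊢
    exact ⟨hc.1, hc.2.trans h.le⟩
  · exact (mem_filter.mp (hsub (mem_filter.mpr ⟨hb, le_rfl⟩))).2.not_gt h

lemma rankBy_injOn (hf : Set.InjOn f s) : Set.InjOn (rankBy s f) s := by
  intro a ha b hb hab
  rcases lt_trichotomy (f a) (f b) with h | h | h
  · exact absurd hab (rankBy_lt_rankBy hb h).ne
  · exact hf ha hb h
  · exact absurd hab (rankBy_lt_rankBy ha h).ne'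

lemma exists_rankBy_eq_sub_one (hf : Set.InjOn f s) {a : β} (ha : a ∈ s)
    (h : 2 ≤ rankBy s f a) : ∃ b ∈ s, rankBy s f b = rankBy s f a - 1 := by
  classical
  set S := {b ∈ s | f b < f a}
  have hrank : rankBy s f a = #S + 1 := by
    have hsplit : {b ∈ s | f b ≤ f a} = insert a S := by
      ext b
      simp only [S, mem_filter, mem_insert]
      constructor
      · rintro ⟨hb, hle⟩
        rcases hle.lt_or_eq with hlt | heq
        · exact .inr ⟨hb, hlt⟩
        · exact .inl (hf hb ha heq)
      · rintro (rfl | ⟨hb, hlt⟩)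
        exacts [⟨ha, le_rfl⟩, ⟨hb, hlt.le⟩]
    rw [rankBy, hsplit, card_insert_of_notMem (by simp [S])]
  obtain ⟨b, hbS, hbmax⟩ := S.exists_max_image f (card_pos.mp (by omega))
  obtain ⟨hb, hba⟩ := mem_filter.mp hbS
  have hbelow : {c ∈ s | f c ≤ f b} = S := by
    ext c
    simp only [S, mem_filter]
    exact ⟨fun ⟨hc, hcb⟩ => ⟨hc, hcb.trans_lt hba⟩,
      fun ⟨hc, hca⟩ => ⟨hc, hbmax c (mem_filter.mpr ⟨hc, hca⟩)⟩⟩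
  refine ⟨b, hb, ?_⟩
  rw [rankBy, hbelow, hrank, Nat.add_sub_cancel]

end Rank

section Standardization

def stdKey (T : ℕ → ℕ → ℕ) (a : ℕ × ℕ) : ℕ ×ₗ ℕ ×ₗ ℕ :=
  toLex (T a.1 a.2, toLex (a.2, a.1))

lemma stdKey_injective (T : ℕ → ℕ → ℕ) : Injective (stdKey T) := by
  intro a b h
  have h' := congrArg Prod.snd (toLex.injective h)
  exact Prod.ext (congrArg Prod.snd (toLex.injective h')) (congrArg Prod.fst (toLex.injective h'))

variable {μ : YoungDiagram} {T : ℕ → ℕ → ℕ}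

lemma stdEntry_eq_rankBy {a : ℕ × ℕ} (ha : a ∈ μ.cells) :
    stdEntry μ T a.1 a.2 = rankBy μ.cells (stdKey T) a := by
  rw [stdEntry, if_pos ha, rankBy]
  congr 1
  refine filter_congr fun b _ => ?_
  simp only [stdKey, Prod.Lex.toLex_le_toLex]
  tauto

lemma stdEntry_pos {a : ℕ × ℕ} (ha : a ∈ μ.cells) : 0 < stdEntry μ T a.1 a.2 := by
  rw [stdEntry_eq_rankBy ha]
  exact rankBy_pos ha

lemma stdEntry_lt_stdEntry {a b : ℕ × ℕ} (ha : a ∈ μ.cells) (hb : b ∈ μ.cells)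
    (h : T a.1 a.2 < T b.1 b.2) : stdEntry μ T a.1 a.2 < stdEntry μ T b.1 b.2 := by
  rw [stdEntry_eq_rankBy ha, stdEntry_eq_rankBy hb]
  exact rankBy_lt_rankBy hb (Prod.Lex.toLex_lt_toLex.mpr (.inl h))

lemma eq_of_stdEntry_eq {a b : ℕ × ℕ} (ha : a ∈ μ.cells) (hb : b ∈ μ.cells)
    (h : stdEntry μ T a.1 a.2 = stdEntry μ T b.1 b.2) : a = b := by
  rw [stdEntry_eq_rankBy ha, stdEntry_eq_rankBy hb] at h
  exact rankBy_injOn (stdKey_injective T).injOn ha hb h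

lemma exists_stdEntry_eq_sub_one {a : ℕ × ℕ} (ha : a ∈ μ.cells)
    (h : 2 ≤ stdEntry μ T a.1 a.2) :
    ∃ b ∈ μ.cells, stdEntry μ T b.1 b.2 = stdEntry μ T a.1 a.2 - 1 := by
  simp only [stdEntry_eq_rankBy ha] at h ⊢
  obtain ⟨b, hb, hrank⟩ := exists_rankBy_eq_sub_one (stdKey_injective T).injOn ha h
  exact ⟨b, hb, by rw [stdEntry_eq_rankBy hb, hrank]⟩

end Standardization

section Sweep

variable {μ : YoungDiagram} {V : ℕ → ℕ → ℕ}

lemma not_isDescent_of_sweepEntry_eq {x y c d : ℕ} (hxy : (x, y) ∈ μ.cells)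
    (hcd : (c, d) ∈ μ.cells) (hle : V c d ≤ V x y)
    (hsweep : sweepEntry μ V x y = sweepEntry μ V c d) {k : ℕ} (hck : V c d < k)
    (hkx : k ≤ V x y) : ¬ IsDescent μ V k := by
  classical
  intro hk
  have hsub :
      {m ∈ Icc 1 (V c d) | IsDescent μ V m} ⊆ {m ∈ Icc 1 (V x y) | IsDescent μ V m} :=
    filter_subset_filter _ (Icc_subset_Icc_right hle)
  have hcard :
      #{m ∈ Icc 1 (V x y) | IsDescent μ V m} ≤ #{m ∈ Icc 1 (V c d) | IsDescent μ V m} := by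
    rw [sweepEntry, sweepEntry, if_pos hxy, if_pos hcd] at hsweep
    omega
  have hmem : k ∈ {m ∈ Icc 1 (V x y) | IsDescent μ V m} :=
    mem_filter.mpr ⟨mem_Icc.mpr ⟨by omega, hkx⟩, hk⟩
  rw [← eq_of_subset_of_card_le hsub hcard, mem_filter, mem_Icc] at hmem
  omega

lemma exists_cell_col_add_le_of_not_isDescent
    (hpred : ∀ a ∈ μ.cells, 2 ≤ V a.1 a.2 → ∃ b ∈ μ.cells, V b.1 b.2 = V a.1 a.2 - 1)
    {i j : ℕ} (hij : (i, j) ∈ μ.cells) (n : ℕ) (hn : n < V i j)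
    (hnod : ∀ k, V i j - n < k → k ≤ V i j → ¬ IsDescent μ V k) :
    ∃ b ∈ μ.cells, V b.1 b.2 = V i j - n ∧ b.2 + n ≤ j := by
  induction n with
  | zero => exact ⟨(i, j), hij, rfl, le_rfl⟩
  | succ n ih =>
    obtain ⟨b, hb, hVb, hcol⟩ :=
      ih (by omega) fun k hk hk' => hnod k (by omega) hk'
    obtain ⟨b', hb', hVb'⟩ := hpred b hb (by omega)
    have hwest : b'.2 < b.2 := by
      by_contra! hge
      exact hnod (V b.1 b.2) (by omega) (by omega) ⟨b, hb, b', hb', rfl, hVb', hge⟩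
    exact ⟨b', hb', by omega, by omega⟩

end Sweep

theorem stmt4_general (μ : YoungDiagram) (U : ℕ → ℕ → ℕ)
    (x y c d : ℕ)
    (hxy : (x, y) ∈ μ.cells) (hcd : (c, d) ∈ μ.cells)
    (hsweep : sweepEntry μ (stdEntry μ U) x y = sweepEntry μ (stdEntry μ U) c d)
    (hyd : y < d) :
    U x y ≤ U c d := by
  by_contra! hlt
  have hV : stdEntry μ U c d < stdEntry μ U x y := stdEntry_lt_stdEntry hcd hxy hlt
  have hVpos : 0 < stdEntry μ U c d := stdEntry_pos hcd
  obtain ⟨b, hb, hVb, hcol⟩ :=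
    exists_cell_col_add_le_of_not_isDescent (V := stdEntry μ U)
      (fun _ => exists_stdEntry_eq_sub_one) hxy
      (stdEntry μ U x y - stdEntry μ U c d) (by omega)
      fun k hk hk' => not_isDescent_of_sweepEntry_eq hxy hcd hV.le hsweep (by omega) hk'
  obtain rfl : b = (c, d) := eq_of_stdEntry_eq (T := U) hb hcd (by dsimp only; omega)
  omega

theorem stmt4 (μ : YoungDiagram) (w : Equiv.Perm ℕ) (U : ℕ → ℕ → ℕ)
    (hU : U ∈ EGset μ w) (x y c d : ℕ)
    (hxy : (x, y) ∈ μ.cells) (hcd : (c, d) ∈ μ.cells)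
    (hsweep : sweepEntry μ (stdEntry μ U) x y = sweepEntry μ (stdEntry μ U) c d)
    (hyd : y < d) :
    U x y ≤ U c d :=
  stmt4_general μ U x y c d hxy hcd hsweep hyd
end

section
/- Let U be an Edelman–Greene tableau of type (λ, w). If two cells (x,y) and (c,d) have equal labels in U, then they have equal labels in sweep(std(U)), i.e., they lie in the same sweep of std(U). -/
open Equiv

/-!
Standardization orders the cells lexicographically by (label, column, row), so the cells
of `U` carrying one label `a` receive consecutive standard labels, increasing from left to
right: two of them sharing a column would have to carry distinct labels, as `U` is strictly
increasing down columns. Hence no consecutive pair inside that block is a descent of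
`std U`, and all its cells have the same sweep entry.
-/

open Finset

section Standardization

variable {μ : YoungDiagram} {T : ℕ → ℕ → ℕ} {p q r : ℕ × ℕ}

/-- The order in which standardization numbers the cells: `q` comes weakly before `p`. -/
abbrev StdLE (T : ℕ → ℕ → ℕ) (q p : ℕ × ℕ) : Prop :=
  T q.1 q.2 < T p.1 p.2 ∨ (T q.1 q.2 = T p.1 p.2 ∧ q.2 < p.2) ∨
    (T q.1 q.2 = T p.1 p.2 ∧ q.2 = p.2 ∧ q.1 ≤ p.1)

lemma stdEntry_eq_card (hp : p ∈ μ.cells) :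
    stdEntry μ T p.1 p.2 = #{q ∈ μ.cells | StdLE T q p} := by
  rw [stdEntry, if_pos hp]

lemma stdEntry_lt_of_not_stdLE (hp : p ∈ μ.cells) (hq : q ∈ μ.cells) (h : ¬ StdLE T q p) :
    stdEntry μ T p.1 p.2 < stdEntry μ T q.1 q.2 := by
  rw [stdEntry_eq_card hp, stdEntry_eq_card hq]
  refine card_lt_card ⟨fun r hr => ?_, fun hsub => h ?_⟩
  · rw [mem_filter] at hr ⊢
    refine ⟨hr.1, ?_⟩
    have := hr.2
    unfold StdLE at this h ⊢
    omega
  · have hqq : q ∈ ({r ∈ μ.cells | StdLE T r q} : Finset _) :=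
      mem_filter.2 ⟨hq, by unfold StdLE; omega⟩
    exact (mem_filter.1 (hsub hqq)).2

lemma stdLE_of_stdEntry_le (hp : p ∈ μ.cells) (hq : q ∈ μ.cells)
    (h : stdEntry μ T q.1 q.2 ≤ stdEntry μ T p.1 p.2) : StdLE T q p :=
  by_contra fun hn => (stdEntry_lt_of_not_stdLE hp hq hn).not_ge h

lemma apply_le_of_stdEntry_le (hp : p ∈ μ.cells) (hq : q ∈ μ.cells)
    (h : stdEntry μ T q.1 q.2 ≤ stdEntry μ T p.1 p.2) : T q.1 q.2 ≤ T p.1 p.2 := by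
  have := stdLE_of_stdEntry_le hp hq h
  unfold StdLE at this
  omega

lemma apply_eq_of_stdEntry_mem_Icc (hp : p ∈ μ.cells) (hq : q ∈ μ.cells) (hr : r ∈ μ.cells)
    (hpq : T p.1 p.2 = T q.1 q.2)
    (hpr : stdEntry μ T p.1 p.2 ≤ stdEntry μ T r.1 r.2)
    (hrq : stdEntry μ T r.1 r.2 ≤ stdEntry μ T q.1 q.2) : T r.1 r.2 = T p.1 p.2 :=
  le_antisymm (hpq ▸ apply_le_of_stdEntry_le hq hr hrq) (apply_le_of_stdEntry_le hr hp hpr)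

lemma snd_lt_snd_of_stdEntry_lt
    (hcol : ∀ i1 i2 j, i1 < i2 → (i2, j) ∈ μ.cells → T i1 j < T i2 j)
    (hp : p ∈ μ.cells) (hq : q ∈ μ.cells) (hpq : T q.1 q.2 = T p.1 p.2)
    (h : stdEntry μ T q.1 q.2 < stdEntry μ T p.1 p.2) : q.2 < p.2 := by
  have hle := stdLE_of_stdEntry_le hp hq h.le
  unfold StdLE at hle
  rcases hle with hlt | hlt | ⟨-, hcol_eq, hrow⟩
  · omega
  · exact hlt.2
  · rcases hrow.lt_or_eq with hrow | hrow
    · have := hcol q.1 p.1 p.2 hrow hp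
      rw [hcol_eq] at hpq
      omega
    · obtain rfl : q = p := Prod.ext hrow hcol_eq
      exact absurd h (lt_irrefl _)

lemma not_isDescent_stdEntry
    (hcol : ∀ i1 i2 j, i1 < i2 → (i2, j) ∈ μ.cells → T i1 j < T i2 j)
    (hp : p ∈ μ.cells) (hq : q ∈ μ.cells) (hpq : T p.1 p.2 = T q.1 q.2) {k : ℕ}
    (hpk : stdEntry μ T p.1 p.2 < k) (hkq : k ≤ stdEntry μ T q.1 q.2) :
    ¬ IsDescent μ (stdEntry μ T) k := by
  rintro ⟨r, hr, s, hs, hrk, hsk, hrs⟩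
  have hsr : stdEntry μ T s.1 s.2 < stdEntry μ T r.1 r.2 := by omega
  have hTr := apply_eq_of_stdEntry_mem_Icc hp hq hr hpq (by omega) (by omega)
  have hTs := apply_eq_of_stdEntry_mem_Icc hp hq hs hpq (by omega) (by omega)
  exact (snd_lt_snd_of_stdEntry_lt hcol hr hs (hTs.trans hTr.symm) hsr).not_ge hrs

end Standardization

lemma sweepEntry_eq_of_forall_not_isDescent {μ : YoungDiagram} {V : ℕ → ℕ → ℕ}
    {p q : ℕ × ℕ} (hp : p ∈ μ.cells) (hq : q ∈ μ.cells) (hpq : V p.1 p.2 ≤ V q.1 q.2)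
    (h : ∀ k, V p.1 p.2 < k → k ≤ V q.1 q.2 → ¬ IsDescent μ V k) :
    sweepEntry μ V p.1 p.2 = sweepEntry μ V q.1 q.2 := by
  unfold sweepEntry
  rw [if_pos hp, if_pos hq]
  congr 2
  ext k
  simp only [mem_filter, mem_Icc]
  constructor
  · rintro ⟨⟨hk1, hkp⟩, hk⟩
    exact ⟨⟨hk1, hkp.trans hpq⟩, hk⟩
  · rintro ⟨⟨hk1, hkq⟩, hk⟩
    exact ⟨⟨hk1, not_lt.1 fun hpk => h k hpk hkq hk⟩, hk⟩

theorem stmt5 (μ : YoungDiagram) (w : Equiv.Perm ℕ) (U : ℕ → ℕ → ℕ)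
    (hU : U ∈ EGset μ w) (x y c d : ℕ)
    (hxy : (x, y) ∈ μ.cells) (hcd : (c, d) ∈ μ.cells)
    (hlabel : U x y = U c d) :
    sweepEntry μ (stdEntry μ U) x y = sweepEntry μ (stdEntry μ U) c d := by
  obtain ⟨-, hcol, -, -⟩ := hU
  wlog hle : stdEntry μ U x y ≤ stdEntry μ U c d generalizing x y c d
  · exact (this c d x y hcd hxy hlabel.symm (le_of_not_ge hle)).symm
  exact sweepEntry_eq_of_forall_not_isDescent (p := (x, y)) (q := (c, d)) hxy hcd hle
    fun _ hk hk' => not_isDescent_stdEntry hcol hxy hcd hlabel hk hk'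
end

section
/- If w ∈ S_∞ is totally commutative, then w is λ-maximal for every partition λ of size ℓ(w); that is, a_{w,λ} = f^λ for all λ with |λ| = ℓ(w). -/
open Equiv

/-!
The letters of a reduced word of a totally commutative `w` are pairwise at distance at least
two, so each letter `a` swaps `a` and `a + 1` independently and `w` moves exactly `2 ℓ(w)`
points. The letters of any other word of length `ℓ(w)` for `w` move at most that many points,
so they are again pairwise at distance at least two, and then they are determined by `w` as the
`x` with `w x = x + 1`. Hence the reduced words of `w` are the rearrangements of one of them, an
Edelman–Greene tableau of type `(λ, w)` is an increasing filling of `λ` using each of these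
`ℓ(w)` letters once, and replacing every letter by its rank among them is a bijection onto the
standard Young tableaux of shape `λ`.
-/

lemma List.perm_iff_toFinset_eq {α : Type*} [DecidableEq α] {l m : List α} (hl : l.Nodup)
    (hlen : m.length = l.length) : m.Perm l ↔ m.toFinset = l.toFinset := by
  refine ⟨List.toFinset_eq_of_perm m l, fun h => ?_⟩
  have hsub : l ⊆ m := fun x hx => List.mem_toFinset.mp (h ▸ List.mem_toFinset.mpr hx)
  exact ((List.subperm_of_subset hl hsub).perm_of_length_le hlen.le).symm

namespace EGs

lemma two_le_dist_iff {a b : ℕ} : 2 ≤ Nat.dist a b ↔ a + 2 ≤ b ∨ b + 2 ≤ a := by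
  unfold Nat.dist; omega

lemma apply_of_ne_of_ne {a x : ℕ} (h : x ≠ a) (h' : x ≠ a + 1) : EGs a x = x :=
  swap_apply_of_ne_of_ne h h'

lemma commute_of_two_le_dist {a b : ℕ} (h : 2 ≤ Nat.dist a b) : Commute (EGs a) (EGs b) := by
  refine (Perm.disjoint_swap_swap ?_).commute
  rw [two_le_dist_iff] at h
  simp only [List.nodup_cons, List.mem_cons, Nat.left_eq_add, one_ne_zero, List.not_mem_nil,
    or_false, false_or, not_or, Nat.add_right_cancel_iff, or_self, not_false_eq_true,
    List.nodup_nil, and_self, and_true]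
  omega

def Separated (l : List ℕ) : Prop := l.Pairwise fun a b => 2 ≤ Nat.dist a b

lemma Separated.nodup {l : List ℕ} (hl : Separated l) : l.Nodup :=
  List.Pairwise.imp (fun hab heq => by subst heq; simp at hab) hl

/-- The points `a, a + 1` moved by each letter `a` of a word. -/
def dominoes (l : List ℕ) : List ℕ := l.flatMap fun a => [a, a + 1]

lemma mem_dominoes {l : List ℕ} {x : ℕ} : x ∈ dominoes l ↔ ∃ a ∈ l, x = a ∨ x = a + 1 := by
  simp [dominoes]

lemma length_dominoes (l : List ℕ) : (dominoes l).length = 2 * l.length := by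
  simp [dominoes, mul_comm]

lemma nodup_dominoes_iff {l : List ℕ} : (dominoes l).Nodup ↔ Separated l := by
  rw [dominoes, List.nodup_flatMap, and_iff_right fun a _ => by simp]
  refine List.Pairwise.iff fun a b => ?_
  simp only [Function.onFun, List.disjoint_cons_right, List.mem_cons, List.not_mem_nil, or_false,
    not_or, List.disjoint_nil_right, and_true, Nat.add_right_cancel_iff, two_le_dist_iff]
  omega

lemma prod_map_apply_of_notMem_dominoes {l : List ℕ} {x : ℕ} (hx : x ∉ dominoes l) :
    (l.map EGs).prod x = x := by
  induction l with
  | nil => rfl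
  | cons a l ih =>
    simp only [mem_dominoes, List.mem_cons, not_exists, not_and, not_or] at hx ih
    have hxa := hx a (Or.inl rfl)
    rw [List.map_cons, List.prod_cons, Perm.mul_apply,
      ih fun b hb => hx b (Or.inr hb), apply_of_ne_of_ne hxa.1 hxa.2]

section Separated

variable {l : List ℕ} (hl : Separated l)
include hl

lemma prod_map_apply_of_mem {a : ℕ} (ha : a ∈ l) :
    (l.map EGs).prod a = a + 1 ∧ (l.map EGs).prod (a + 1) = a := by
  induction l with
  | nil => simp at ha
  | cons b l ih =>
    rw [Separated, List.pairwise_cons] at hl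
    simp only [List.map_cons, List.prod_cons, Perm.mul_apply]
    rcases List.mem_cons.mp ha with rfl | ha
    · have hfix : ∀ x, x = a ∨ x = a + 1 → (l.map EGs).prod x = x := fun x hx =>
        prod_map_apply_of_notMem_dominoes fun hmem => by
          obtain ⟨c, hc, hxc⟩ := mem_dominoes.mp hmem
          have := two_le_dist_iff.mp (hl.1 c hc)
          omega
      rw [hfix a (.inl rfl), hfix (a + 1) (.inr rfl)]
      exact ⟨swap_apply_left _ _, swap_apply_right _ _⟩
    · have hba := two_le_dist_iff.mp (hl.1 a ha)
      rw [(ih hl.2 ha).1, (ih hl.2 ha).2]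
      exact ⟨apply_of_ne_of_ne (by omega) (by omega), apply_of_ne_of_ne (by omega) (by omega)⟩

lemma mem_iff_prod_map_apply_eq_succ {x : ℕ} : x ∈ l ↔ (l.map EGs).prod x = x + 1 := by
  refine ⟨fun hx => (prod_map_apply_of_mem hl hx).1, fun hx => ?_⟩
  by_contra hxl
  by_cases hmem : x ∈ dominoes l
  · obtain ⟨a, ha, hxa⟩ := mem_dominoes.mp hmem
    have := prod_map_apply_of_mem hl ha
    rcases hxa with rfl | rfl
    · exact hxl ha
    · omega
  · rw [prod_map_apply_of_notMem_dominoes hmem] at hx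
    omega

lemma dominoes_subset_of_prod_eq {m : List ℕ} (h : (l.map EGs).prod = (m.map EGs).prod) :
    dominoes l ⊆ dominoes m := by
  intro x hx
  by_contra hxm
  have hfix := prod_map_apply_of_notMem_dominoes hxm
  rw [← h] at hfix
  obtain ⟨a, ha, hxa⟩ := mem_dominoes.mp hx
  have := prod_map_apply_of_mem hl ha
  rcases hxa with rfl | rfl <;> omega

/-- The `2 |l|` points moved by the product can only be covered by the at most `2 |m|` points
moved by the letters of `m` if these are all distinct. -/
lemma separated_of_prod_eq {m : List ℕ} (h : (l.map EGs).prod = (m.map EGs).prod)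
    (hlen : m.length ≤ l.length) : Separated m := by
  rw [← nodup_dominoes_iff] at hl ⊢
  have hsub := List.subperm_of_subset hl (dominoes_subset_of_prod_eq (nodup_dominoes_iff.mp hl) h)
  refine (hsub.perm_of_length_le ?_).nodup_iff.mp hl
  rw [length_dominoes, length_dominoes]
  omega

lemma perm_of_prod_eq {m : List ℕ} (hm : Separated m)
    (h : (m.map EGs).prod = (l.map EGs).prod) : m.Perm l := by
  rw [List.perm_ext_iff_of_nodup hm.nodup hl.nodup]
  intro x
  rw [mem_iff_prod_map_apply_eq_succ hm, mem_iff_prod_map_apply_eq_succ hl, h]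

end Separated

lemma isReducedWord_iff_perm {w : Perm ℕ} {l m : List ℕ} (hw : IsReducedWord w l)
    (hl : Separated l) : IsReducedWord w m ↔ m.Perm l := by
  refine ⟨fun hm => ?_, fun hml => ⟨?_, hml.length_eq.trans hw.2⟩⟩
  · have hprod : (l.map EGs).prod = (m.map EGs).prod := hw.1.trans hm.1.symm
    exact perm_of_prod_eq hl (separated_of_prod_eq hl hprod (hm.2.trans hw.2.symm).le)
      hprod.symm
  · rw [← hw.1]
    refine (hml.map EGs).prod_eq' ?_
    rw [List.pairwise_map]
    exact ((hml.pairwise_iff fun h => by rwa [Nat.dist_comm]).mpr hl).imp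
      commute_of_two_le_dist

end EGs

namespace Finset

def extendOrderIso {A B : Finset ℕ} (e : A ≃o B) (x : ℕ) : ℕ :=
  if hx : x ∈ A then e ⟨x, hx⟩ else 0

variable {A B : Finset ℕ} (e : A ≃o B)

lemma extendOrderIso_of_mem {x : ℕ} (hx : x ∈ A) : extendOrderIso e x = e ⟨x, hx⟩ :=
  dif_pos hx

lemma strictMonoOn_extendOrderIso : StrictMonoOn (extendOrderIso e) A := fun x hx y hy hxy => by
  rw [extendOrderIso_of_mem e hx, extendOrderIso_of_mem e hy]
  exact e.strictMono hxy

lemma image_extendOrderIso : A.image (extendOrderIso e) = B := by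
  ext y
  refine ⟨fun hy => ?_, fun hy => ?_⟩
  · obtain ⟨x, hx, rfl⟩ := mem_image.mp hy
    rw [extendOrderIso_of_mem e hx]
    exact (e _).2
  · refine mem_image.mpr ⟨e.symm ⟨y, hy⟩, (e.symm _).2, ?_⟩
    rw [extendOrderIso_of_mem e (e.symm _).2]
    simp

lemma extendOrderIso_symm_extendOrderIso {x : ℕ} (hx : x ∈ A) :
    extendOrderIso e.symm (extendOrderIso e x) = x := by
  rw [extendOrderIso_of_mem e hx, extendOrderIso_of_mem e.symm (e _).2]
  simp

end Finset

namespace YoungDiagram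

def readingCells (μ : YoungDiagram) : List (ℕ × ℕ) :=
  (List.range (μ.colLen 0)).flatMap fun i => ((List.range (μ.rowLen i)).reverse).map fun j => (i, j)

lemma readingWord_eq_map (μ : YoungDiagram) (T : ℕ → ℕ → ℕ) :
    readingWord μ T = μ.readingCells.map fun c => T c.1 c.2 := by
  simp [readingWord, readingCells, List.map_flatMap, Function.comp_def]

lemma mem_readingCells {μ : YoungDiagram} {c : ℕ × ℕ} : c ∈ μ.readingCells ↔ c ∈ μ.cells := by
  obtain ⟨i, j⟩ := c
  simp only [readingCells, List.mem_flatMap, List.mem_map, List.mem_reverse, List.mem_range,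
    mem_cells, Prod.mk.injEq]
  refine ⟨fun ⟨_, _, _, hj, hi, hj'⟩ => hi ▸ hj' ▸ mem_iff_lt_rowLen.mpr hj, fun hij => ?_⟩
  exact ⟨i, mem_iff_lt_colLen.mp (μ.up_left_mem le_rfl (Nat.zero_le j) hij), j,
    mem_iff_lt_rowLen.mp hij, rfl, rfl⟩

lemma nodup_readingCells (μ : YoungDiagram) : μ.readingCells.Nodup := by
  rw [readingCells, List.nodup_flatMap]
  refine ⟨fun i _ => (List.nodup_reverse.mpr List.nodup_range).map fun j j' h => by simpa using h,
    List.pairwise_lt_range.imp fun hii' x hx hx' => ?_⟩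
  simp only [List.mem_map] at hx hx'
  obtain ⟨j, _, rfl⟩ := hx
  obtain ⟨j', _, h⟩ := hx'
  simp only [Prod.mk.injEq] at h
  omega

lemma toFinset_readingWord (μ : YoungDiagram) (T : ℕ → ℕ → ℕ) :
    (readingWord μ T).toFinset = μ.cells.image fun c => T c.1 c.2 := by
  ext x
  simp [readingWord_eq_map, mem_readingCells]

lemma length_readingWord (μ : YoungDiagram) (T : ℕ → ℕ → ℕ) :
    (readingWord μ T).length = μ.card := by
  rw [readingWord_eq_map, List.length_map, ← List.toFinset_card_of_nodup μ.nodup_readingCells]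
  congr 1
  ext c
  simp [mem_readingCells]

def increasingFillings (μ : YoungDiagram) (A : Finset ℕ) : Set (ℕ → ℕ → ℕ) :=
  {T | (∀ i j1 j2, j1 < j2 → (i, j2) ∈ μ.cells → T i j1 < T i j2) ∧
       (∀ i1 i2 j, i1 < i2 → (i2, j) ∈ μ.cells → T i1 j < T i2 j) ∧
       (∀ i j, (i, j) ∉ μ.cells → T i j = 0) ∧
       μ.cells.image (fun c => T c.1 c.2) = A}

lemma SYTset_eq_increasingFillings (μ : YoungDiagram) :
    SYTset μ = μ.increasingFillings (Finset.Icc 1 μ.card) := rfl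

def relabel (μ : YoungDiagram) (f : ℕ → ℕ) (T : ℕ → ℕ → ℕ) (i j : ℕ) : ℕ :=
  if (i, j) ∈ μ.cells then f (T i j) else 0

variable {μ : YoungDiagram} {A B : Finset ℕ}

lemma entry_mem_of_mem_increasingFillings {T : ℕ → ℕ → ℕ} (hT : T ∈ μ.increasingFillings A)
    {i j : ℕ} (hij : (i, j) ∈ μ.cells) : T i j ∈ A :=
  hT.2.2.2 ▸ Finset.mem_image_of_mem (fun c => T c.1 c.2) hij

lemma mapsTo_relabel {f : ℕ → ℕ} (hf : StrictMonoOn f A) (hfAB : A.image f = B) :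
    Set.MapsTo (μ.relabel f) (μ.increasingFillings A) (μ.increasingFillings B) := by
  intro T hT
  have hmem := fun {i j} (hij : (i, j) ∈ μ.cells) => entry_mem_of_mem_increasingFillings hT hij
  refine ⟨fun i j1 j2 hj hij2 => ?_, fun i1 i2 j hi hij2 => ?_, fun i j hij => if_neg hij, ?_⟩
  · have hij1 : (i, j1) ∈ μ.cells := μ.up_left_mem le_rfl hj.le hij2
    simp only [relabel, if_pos hij1, if_pos hij2]
    exact hf (hmem hij1) (hmem hij2) (hT.1 i j1 j2 hj hij2)
  · have hij1 : (i1, j) ∈ μ.cells := μ.up_left_mem hi.le le_rfl hij2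
    simp only [relabel, if_pos hij1, if_pos hij2]
    exact hf (hmem hij1) (hmem hij2) (hT.2.1 i1 i2 j hi hij2)
  · rw [← hfAB, ← hT.2.2.2, Finset.image_image]
    exact Finset.image_congr fun c hc => if_pos hc

lemma leftInvOn_relabel {f g : ℕ → ℕ} (hgf : ∀ x ∈ A, g (f x) = x) :
    Set.LeftInvOn (μ.relabel g) (μ.relabel f) (μ.increasingFillings A) := by
  intro T hT
  funext i j
  by_cases hij : (i, j) ∈ μ.cells
  · simp only [relabel, if_pos hij]
    exact hgf _ (entry_mem_of_mem_increasingFillings hT hij)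
  · simp only [relabel, if_neg hij]
    exact (hT.2.2.1 i j hij).symm

lemma ncard_increasingFillings_congr (h : A.card = B.card) :
    (μ.increasingFillings A).ncard = (μ.increasingFillings B).ncard := by
  let e : A ≃o B := (A.orderIsoOfFin rfl).symm.trans (B.orderIsoOfFin h.symm)
  have hinv : Set.InvOn (μ.relabel (Finset.extendOrderIso e.symm))
      (μ.relabel (Finset.extendOrderIso e)) (μ.increasingFillings A) (μ.increasingFillings B) :=
    ⟨leftInvOn_relabel fun _ => Finset.extendOrderIso_symm_extendOrderIso e,
      leftInvOn_relabel fun _ => Finset.extendOrderIso_symm_extendOrderIso e.symm⟩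
  refine (hinv.bijOn ?_ ?_).ncard_eq
  · exact mapsTo_relabel (Finset.strictMonoOn_extendOrderIso e) (Finset.image_extendOrderIso e)
  · exact mapsTo_relabel (Finset.strictMonoOn_extendOrderIso e.symm)
      (Finset.image_extendOrderIso e.symm)

lemma EGset_eq_increasingFillings {w : Perm ℕ} {l : List ℕ}
    (hw : IsReducedWord w l) (hl : EGs.Separated l) (hμ : μ.card = coxLength w) :
    EGset μ w = μ.increasingFillings l.toFinset := by
  ext T
  simp only [EGset, increasingFillings, Set.mem_ofPred_eq, EGs.isReducedWord_iff_perm hw hl,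
    List.perm_iff_toFinset_eq hl.nodup ((length_readingWord μ T).trans (hμ.trans hw.2.symm)),
    toFinset_readingWord]

end YoungDiagram

theorem stmt13 (w : Equiv.Perm ℕ) (h : TotallyCommutative w)
    (μ : YoungDiagram) (hμ : μ.card = coxLength w) :
    (EGset μ w).ncard = (SYTset μ).ncard := by
  obtain ⟨l, hw, hl : EGs.Separated l⟩ := h
  rw [YoungDiagram.EGset_eq_increasingFillings hw hl hμ, YoungDiagram.SYTset_eq_increasingFillings]
  apply YoungDiagram.ncard_increasingFillings_congr
  simp [List.toFinset_card_of_nodup hl.nodup, hw.2, hμ]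
end
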